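/- The surfaces X = {xz − y² + 1 = 0} and Y = {x²z − y² + 1 = 0} in ℂ³ become isomorphic after taking a product with an affine line in the following weak sense verifiable at the level of point sets with the fibration structure: both X and Y admit surjections π_X, π_Y onto ℂ (the x-coordinate) such that all fibers over nonzero a ∈ ℂ are single free ℂ-orbits, and the fiber over 0 is a disjoint union of exactly two free ℂ-orbits. -/

import Mathlib

def actX (t : ℂ) (p : ℂ × ℂ × ℂ) : ℂ × ℂ × ℂ :=
  (p.1, p.2.1 + p.1 * t, p.2.2 + 2 * p.2.1 * t + p.1 * t ^ 2)

def actY (t : ℂ) (p : ℂ × ℂ × ℂ) : ℂ × ℂ × ℂ :=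
  (p.1, p.2.1 + p.1 ^ 2 * t, p.2.2 + 2 * p.2.1 * t + p.1 ^ 2 * t ^ 2)

def onX (p : ℂ × ℂ × ℂ) : Prop := p.1 * p.2.2 - p.2.1 ^ 2 + 1 = 0

def onY (p : ℂ × ℂ × ℂ) : Prop := p.1 ^ 2 * p.2.2 - p.2.1 ^ 2 + 1 = 0

/-!
Both surfaces are members of the family `w(x) z = y² - 1` with the action
`t • (x, y, z) = (x, y + w(x) t, z + 2 y t + w(x) t²)`, which preserves `y² - w(x) z`.
Over a point with `w(x) ≠ 0` the coordinate `y` moves freely and determines `z`, so the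
fiber is one orbit. Over a zero of `w` the fiber is `y = ±1` with `z` arbitrary, the action
fixes `y` and translates `z` by `2 y t`, so it splits into the two free orbits `y = 1`, `y = -1`.
-/

namespace Danielewski

variable {K : Type*} [Field K] (w : K → K)

def act (t : K) (p : K × K × K) : K × K × K :=
  (p.1, p.2.1 + w p.1 * t, p.2.2 + 2 * p.2.1 * t + w p.1 * t ^ 2)

def OnSurface (p : K × K × K) : Prop := w p.1 * p.2.2 - p.2.1 ^ 2 + 1 = 0

variable {w}

theorem onSurface_one_zero (a : K) : OnSurface w (a, 1, 0) := by
  simp [OnSurface]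

theorem OnSurface.sq_eq_one {p : K × K × K} (hp : OnSurface w p) (hw : w p.1 = 0) :
    p.2.1 ^ 2 = 1 := by
  unfold OnSurface at hp
  rw [hw] at hp
  linear_combination -hp

theorem OnSurface.snd_fst_ne_zero {p : K × K × K} (hp : OnSurface w p) (hw : w p.1 = 0) :
    p.2.1 ≠ 0 := by
  rintro h0
  simpa [h0] using hp.sq_eq_one hw

theorem OnSurface.exists_act_eq_of_ne_zero {p p' : K × K × K} (hp : OnSurface w p)
    (hp' : OnSurface w p') (hfst : p.1 = p'.1) (hw : w p.1 ≠ 0) : ∃ t, act w t p = p' := by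
  obtain ⟨t, ht⟩ : ∃ t, w p.1 * t = p'.2.1 - p.2.1 := ⟨_, mul_div_cancel₀ _ hw⟩
  refine ⟨t, Prod.ext hfst (Prod.ext ?_ ?_)⟩
  · simp only [act, ht]
    ring
  · unfold OnSurface at hp hp'
    rw [← hfst] at hp'
    apply mul_left_cancel₀ hw
    simp only [act]
    linear_combination hp - hp' + (2 * p.2.1 + w p.1 * t + (p'.2.1 - p.2.1)) * ht

variable [NeZero (2 : K)]

theorem OnSurface.eq_zero_of_act_eq_self {p : K × K × K} {t : K} (hp : OnSurface w p)
    (h : act w t p = p) : t = 0 := by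
  simp only [act, Prod.ext_iff] at h
  obtain ⟨-, hy, hz⟩ := h
  by_contra ht
  have hw : w p.1 = 0 := by
    simpa [ht] using (by linear_combination hy : w p.1 * t = 0)
  have : 2 * p.2.1 * t = 0 := by linear_combination hz - t ^ 2 * hw
  simp [hp.snd_fst_ne_zero hw, ht, two_ne_zero] at this

theorem OnSurface.exists_act_eq_of_eq_zero {r : K × K × K} (hr : OnSurface w r)
    (hw : w r.1 = 0) : ∃ t, act w t (r.1, r.2.1, 0) = r := by
  have hy0 := hr.snd_fst_ne_zero hw
  refine ⟨r.2.2 / (2 * r.2.1), Prod.ext rfl (Prod.ext ?_ ?_)⟩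
  · simp [act, hw]
  · simp only [act, hw]
    field_simp
    ring

theorem not_exists_act_one_eq_neg_one {a : K} (hw : w a = 0) :
    ¬ ∃ t, act w t (a, 1, 0) = (a, -1, 0) := by
  rintro ⟨t, h⟩
  simp only [act, hw, Prod.ext_iff, zero_mul, add_zero] at h
  exact two_ne_zero (by linear_combination h.2.1 : (2 : K) = 0)

theorem fibration_structure (hw : ∀ a, w a = 0 ↔ a = 0) :
    (∀ a : K, ∃ y z : K, OnSurface w (a, y, z)) ∧
    (∀ (t : K) (p : K × K × K), OnSurface w p → act w t p = p → t = 0) ∧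
    (∀ a : K, a ≠ 0 → ∀ p p' : K × K × K, OnSurface w p → OnSurface w p' →
      p.1 = a → p'.1 = a → ∃ t : K, act w t p = p') ∧
    (∃ p q : K × K × K, OnSurface w p ∧ OnSurface w q ∧ p.1 = 0 ∧ q.1 = 0 ∧
      (¬ ∃ t : K, act w t p = q) ∧
      ∀ r : K × K × K, OnSurface w r → r.1 = 0 →
        (∃ t : K, act w t p = r) ∨ (∃ t : K, act w t q = r)) := by
  refine ⟨fun a ↦ ⟨1, 0, onSurface_one_zero a⟩, fun t p hp ↦ hp.eq_zero_of_act_eq_self,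
    fun a ha p p' hp hp' h h' ↦ hp.exists_act_eq_of_ne_zero hp' (h.trans h'.symm)
      (by rwa [h, Ne, hw]), ⟨(0, 1, 0), (0, -1, 0), onSurface_one_zero 0, ?_, rfl, rfl,
      not_exists_act_one_eq_neg_one ((hw 0).mpr rfl), fun r hr hr0 ↦ ?_⟩⟩
  · simp [OnSurface, (hw 0).mpr rfl]
  · have hwr : w r.1 = 0 := (hw _).mpr hr0
    obtain ⟨t, ht⟩ := hr.exists_act_eq_of_eq_zero hwr
    rw [hr0] at ht
    rcases sq_eq_one_iff.mp (hr.sq_eq_one hwr) with hy | hy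
    · exact .inl ⟨t, by rwa [hy] at ht⟩
    · exact .inr ⟨t, by rwa [hy] at ht⟩

end Danielewski

open Danielewski in
/-- Both Danielewski surfaces `X = {xz − y² + 1 = 0}` and `Y = {x²z − y² + 1 = 0}`
fiber over the `x`-line with the same orbit structure for their additive
`ℂ`-actions: the projection to the first coordinate is surjective, the actions
are free (so every orbit is a free orbit), each fiber over `a ≠ 0` is a single
orbit, and the fiber over `0` consists of exactly two orbits. -/
theorem danielewski_same_fibration_structure :
    -- π_X surjective
    (∀ a : ℂ, ∃ y z : ℂ, onX (a, y, z)) ∧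
    -- the action on X is free
    (∀ (t : ℂ) (p : ℂ × ℂ × ℂ), onX p → actX t p = p → t = 0) ∧
    -- fibers of X over a ≠ 0 are single orbits
    (∀ a : ℂ, a ≠ 0 → ∀ p p' : ℂ × ℂ × ℂ, onX p → onX p' → p.1 = a → p'.1 = a →
      ∃ t : ℂ, actX t p = p') ∧
    -- the fiber of X over 0 is exactly two orbits
    (∃ p q : ℂ × ℂ × ℂ, onX p ∧ onX q ∧ p.1 = 0 ∧ q.1 = 0 ∧
      (¬ ∃ t : ℂ, actX t p = q) ∧
      ∀ r : ℂ × ℂ × ℂ, onX r → r.1 = 0 →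
        (∃ t : ℂ, actX t p = r) ∨ (∃ t : ℂ, actX t q = r)) ∧
    -- π_Y surjective
    (∀ a : ℂ, ∃ y z : ℂ, onY (a, y, z)) ∧
    -- the action on Y is free
    (∀ (t : ℂ) (p : ℂ × ℂ × ℂ), onY p → actY t p = p → t = 0) ∧
    -- fibers of Y over a ≠ 0 are single orbits
    (∀ a : ℂ, a ≠ 0 → ∀ p p' : ℂ × ℂ × ℂ, onY p → onY p' → p.1 = a → p'.1 = a →
      ∃ t : ℂ, actY t p = p') ∧
    -- the fiber of Y over 0 is exactly two orbits
    (∃ p q : ℂ × ℂ × ℂ, onY p ∧ onY q ∧ p.1 = 0 ∧ q.1 = 0 ∧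
      (¬ ∃ t : ℂ, actY t p = q) ∧
      ∀ r : ℂ × ℂ × ℂ, onY r → r.1 = 0 →
        (∃ t : ℂ, actY t p = r) ∨ (∃ t : ℂ, actY t q = r)) := by
  obtain ⟨surjX, freeX, orbitX, zeroFiberX⟩ :=
    fibration_structure (K := ℂ) (w := fun x ↦ x) fun _ ↦ Iff.rfl
  obtain ⟨surjY, freeY, orbitY, zeroFiberY⟩ :=
    fibration_structure (K := ℂ) (w := fun x ↦ x ^ 2) fun _ ↦ sq_eq_zero_iff
  exact ⟨surjX, freeX, orbitX, zeroFiberX, surjY, freeY, orbitY, zeroFiberY⟩
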